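/- Let (N; a₁, a₂, a₃, a₄) be admissible with 0 < aᵢ < N for all i (strict inequalities), and suppose that either N is odd, or N is even and at least one aᵢ is even. Then Σ⁻(N; a₁, a₂, a₃, a₄) ≥ 1, and Σ⁻(N; a₁, a₂, a₃, a₄) = 1 if and only if (N, (a₁,a₂,a₃,a₄)) is, up to a permutation of the aᵢ, one of the following thirteen tuples: (4, (3,2,2,1)); (5, (2,1,1,1)); (5, (4,2,2,2)); (5, (1,3,3,3)); (5, (3,4,4,4)); (6, (5,3,2,2)); (6, (1,3,4,4)); (8, (4,2,1,1)); (8, (4,6,3,3)); (8, (4,2,5,5)); (8, (4,6,7,7)); (8, (7,4,3,2)); (8, (1,4,5,6)). -/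
import Mathlib

noncomputable def minusTerm (N a : ℕ) : ℚ :=
  if Odd (N / Nat.gcd N a) then (Nat.gcd N a : ℚ) ^ 2 / (12 * N)
  else -((Nat.gcd N a : ℚ) ^ 2) / (6 * N)

noncomputable def sigmaMinus (N a1 a2 a3 a4 : ℕ) : ℚ :=
  (N : ℚ) / 6
    + minusTerm N a1 + minusTerm N a2 + minusTerm N a3 + minusTerm N a4
    + ((Nat.gcd N (a1 + a2) : ℚ) ^ 2 + (Nat.gcd N (a1 + a3) : ℚ) ^ 2 +
        (Nat.gcd N (a1 + a4) : ℚ) ^ 2) / (6 * N)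

/-- Integer version of `minusTerm`, scaled by `24 N`. -/
def tInt (N a : ℕ) : ℤ :=
  if Odd (N / Nat.gcd N a) then 2 * (Nat.gcd N a : ℤ) ^ 2 else -4 * (Nat.gcd N a : ℤ) ^ 2

/-- Integer version of `sigmaMinus`, scaled by `24 N`. -/
def SInt (N a1 a2 a3 a4 : ℕ) : ℤ :=
  4 * (N : ℤ) ^ 2 + tInt N a1 + tInt N a2 + tInt N a3 + tInt N a4
    + 4 * ((Nat.gcd N (a1 + a2) : ℤ) ^ 2 + (Nat.gcd N (a1 + a3) : ℤ) ^ 2 +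
        (Nat.gcd N (a1 + a4) : ℤ) ^ 2)

lemma minusTerm_eq (N a : ℕ) (hN : 0 < N) :
    minusTerm N a = (tInt N a : ℚ) / (24 * N) := by
  have hN' : (N : ℚ) ≠ 0 := by exact_mod_cast hN.ne'
  unfold minusTerm tInt
  split_ifs <;> push_cast <;> field_simp <;> ring

lemma sigma_eq (N a1 a2 a3 a4 : ℕ) (hN : 0 < N) :
    sigmaMinus N a1 a2 a3 a4 = (SInt N a1 a2 a3 a4 : ℚ) / (24 * N) := by
  have hN' : (N : ℚ) ≠ 0 := by exact_mod_cast hN.ne'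
  unfold sigmaMinus SInt
  rw [minusTerm_eq N a1 hN, minusTerm_eq N a2 hN, minusTerm_eq N a3 hN, minusTerm_eq N a4 hN]
  push_cast
  field_simp
  ring

lemma one_le_iff (N a1 a2 a3 a4 : ℕ) (hN : 0 < N) :
    1 ≤ sigmaMinus N a1 a2 a3 a4 ↔ 24 * (N : ℤ) ≤ SInt N a1 a2 a3 a4 := by
  have hN' : (0 : ℚ) < 24 * N := by positivity
  rw [sigma_eq _ _ _ _ _ hN, le_div_iff₀ hN', one_mul]
  constructor <;> intro h <;> exact_mod_cast h

lemma eq_one_iff (N a1 a2 a3 a4 : ℕ) (hN : 0 < N) :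
    sigmaMinus N a1 a2 a3 a4 = 1 ↔ SInt N a1 a2 a3 a4 = 24 * (N : ℤ) := by
  have hN' : (24 * N : ℚ) ≠ 0 := by positivity
  rw [sigma_eq _ _ _ _ _ hN, div_eq_iff hN', one_mul]
  constructor <;> intro h <;> exact_mod_cast h

lemma tInt_ge (N a : ℕ) : -4 * (Nat.gcd N a : ℤ) ^ 2 ≤ tInt N a := by
  unfold tInt
  split_ifs
  · nlinarith [sq_nonneg ((Nat.gcd N a : ℤ))]
  · exact le_rfl

lemma dvd_eq (N s : ℕ) (h0 : 0 < s) (h2 : s < 2 * N) (hd : N ∣ s) : s = N := by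
  obtain ⟨c, rfl⟩ := hd
  rcases c with _ | _ | c <;> simp only [Nat.mul_succ, Nat.mul_zero] at * <;> omega

lemma gcd_dich (N a : ℕ) (ha : 0 < a) (hb : a < N) :
    (2 * a = N ∧ 2 * Nat.gcd N a = N) ∨ 3 * Nat.gcd N a ≤ N := by
  have hda := Nat.gcd_dvd_right N a
  have hd0 : 0 < Nat.gcd N a := Nat.gcd_pos_of_pos_right N ha
  have hda' : Nat.gcd N a ≤ a := Nat.le_of_dvd ha hda
  obtain ⟨k, hk⟩ := Nat.gcd_dvd_left N a
  obtain ⟨m, hm⟩ := hda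
  rcases k with _ | _ | _ | k
  · simp only [Nat.mul_zero] at hk; omega
  · simp only [Nat.mul_succ, Nat.mul_zero] at hk; omega
  · left
    rcases m with _ | _ | m <;> simp only [Nat.mul_succ, Nat.mul_zero] at hk hm <;> omega
  · right
    simp only [Nat.mul_succ, Nat.mul_zero] at hk; omega
set_option maxHeartbeats 1200000 in
lemma main_lt (N a1 a2 a3 a4 : ℕ) (hN : 14 ≤ N)
    (ha1 : 0 < a1) (ha2 : 0 < a2) (ha3 : 0 < a3) (ha4 : 0 < a4)
    (hb1 : a1 < N) (hb2 : a2 < N) (hb3 : a3 < N) (hb4 : a4 < N)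
    (hsum : N ∣ a1 + a2 + a3 + a4) :
    24 * (N : ℤ) < SInt N a1 a2 a3 a4 := by
  have hN0 : 0 < N := by omega
  set d1 := Nat.gcd N a1 with hd1def
  set d2 := Nat.gcd N a2 with hd2def
  set d3 := Nat.gcd N a3 with hd3def
  set d4 := Nat.gcd N a4 with hd4def
  set g2 := Nat.gcd N (a1 + a2) with hg2def
  set g3 := Nat.gcd N (a1 + a3) with hg3def
  set g4 := Nat.gcd N (a1 + a4) with hg4def
  have h1 := gcd_dich N a1 ha1 hb1
  have h2 := gcd_dich N a2 ha2 hb2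
  have h3 := gcd_dich N a3 ha3 hb3
  have h4 := gcd_dich N a4 ha4 hb4
  have ht1 := tInt_ge N a1
  have ht2 := tInt_ge N a2
  have ht3 := tInt_ge N a3
  have ht4 := tInt_ge N a4
  rw [← hd1def] at h1 ht1
  rw [← hd2def] at h2 ht2
  rw [← hd3def] at h3 ht3
  rw [← hd4def] at h4 ht4
  have hNZ : (14 : ℤ) ≤ (N : ℤ) := by exact_mod_cast hN
  -- squares of the pair gcds are at least 1
  have hg2p : 0 < g2 := Nat.gcd_pos_of_pos_left _ hN0
  have hg3p : 0 < g3 := Nat.gcd_pos_of_pos_left _ hN0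
  have hg4p : 0 < g4 := Nat.gcd_pos_of_pos_left _ hN0
  have hg2sq : (1 : ℤ) ≤ (g2 : ℤ) ^ 2 := by
    have : (1 : ℤ) ≤ (g2 : ℤ) := by exact_mod_cast hg2p
    nlinarith
  have hg3sq : (1 : ℤ) ≤ (g3 : ℤ) ^ 2 := by
    have : (1 : ℤ) ≤ (g3 : ℤ) := by exact_mod_cast hg3p
    nlinarith
  have hg4sq : (1 : ℤ) ≤ (g4 : ℤ) ^ 2 := by
    have : (1 : ℤ) ≤ (g4 : ℤ) := by exact_mod_cast hg4p
    nlinarith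
  -- 4 dᵢ² ≤ N² in all cases
  have h2d1 : 2 * d1 ≤ N := by rcases h1 with ⟨_, h⟩ | h <;> omega
  have h2d2 : 2 * d2 ≤ N := by rcases h2 with ⟨_, h⟩ | h <;> omega
  have h2d3 : 2 * d3 ≤ N := by rcases h3 with ⟨_, h⟩ | h <;> omega
  have h2d4 : 2 * d4 ≤ N := by rcases h4 with ⟨_, h⟩ | h <;> omega
  have hq1 : 4 * (d1 : ℤ) ^ 2 ≤ (N : ℤ) ^ 2 := by
    have h : 2 * (d1 : ℤ) ≤ (N : ℤ) := by exact_mod_cast h2d1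
    nlinarith [Int.natCast_nonneg d1]
  have hq2 : 4 * (d2 : ℤ) ^ 2 ≤ (N : ℤ) ^ 2 := by
    have h : 2 * (d2 : ℤ) ≤ (N : ℤ) := by exact_mod_cast h2d2
    nlinarith [Int.natCast_nonneg d2]
  have hq3 : 4 * (d3 : ℤ) ^ 2 ≤ (N : ℤ) ^ 2 := by
    have h : 2 * (d3 : ℤ) ≤ (N : ℤ) := by exact_mod_cast h2d3
    nlinarith [Int.natCast_nonneg d3]
  have hq4 : 4 * (d4 : ℤ) ^ 2 ≤ (N : ℤ) ^ 2 := by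
    have h : 2 * (d4 : ℤ) ≤ (N : ℤ) := by exact_mod_cast h2d4
    nlinarith [Int.natCast_nonneg d4]
  have nine : ∀ d : ℕ, 3 * d ≤ N → 9 * (d : ℤ) ^ 2 ≤ (N : ℤ) ^ 2 := by
    intro d hd
    have h : 3 * (d : ℤ) ≤ (N : ℤ) := by exact_mod_cast hd
    nlinarith [Int.natCast_nonneg d]
  have hX : 28 * (N : ℤ) - 196 ≤ (N : ℤ) ^ 2 := by nlinarith [sq_nonneg ((N : ℤ) - 14)]
  -- helper to get a pair gcd equal to N
  have pairN : ∀ x y : ℕ, x + y = N → Nat.gcd N (x + y) = N := by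
    intro x y h; rw [h, Nat.gcd_self]
  unfold SInt
  rw [← hg2def, ← hg3def, ← hg4def]
  set t1 := tInt N a1 with ht1def
  set t2 := tInt N a2 with ht2def
  set t3 := tInt N a3 with ht3def
  set t4 := tInt N a4 with ht4def
  clear_value t1 t2 t3 t4
  rcases h1 with ⟨hA1, hD1⟩ | h1
  · -- a1 = N/2
    rcases h2 with ⟨hA2, hD2⟩ | h2
    · -- a1 + a2 = N hence g2 = N
      have hg2N : g2 = N := by rw [hg2def]; exact pairN a1 a2 (by omega)
      have hg2Z : ((g2 : ℤ)) ^ 2 = (N : ℤ) ^ 2 := by rw [hg2N]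
      linarith
    rcases h3 with ⟨hA3, hD3⟩ | h3
    · have hg3N : g3 = N := by rw [hg3def]; exact pairN a1 a3 (by omega)
      have hg3Z : ((g3 : ℤ)) ^ 2 = (N : ℤ) ^ 2 := by rw [hg3N]
      linarith
    rcases h4 with ⟨hA4, hD4⟩ | h4
    · have hg4N : g4 = N := by rw [hg4def]; exact pairN a1 a4 (by omega)
      have hg4Z : ((g4 : ℤ)) ^ 2 = (N : ℤ) ^ 2 := by rw [hg4N]
      linarith
    -- exactly a1 is a half: 9 d² ≤ N² for i = 2,3,4
    have h92 := nine d2 h2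
    have h93 := nine d3 h3
    have h94 := nine d4 h4
    linarith
  rcases h2 with ⟨hA2, hD2⟩ | h2
  · rcases h3 with ⟨hA3, hD3⟩ | h3
    · -- a2 + a3 = N, so a1 + a4 = N and g4 = N
      have hdvd : N ∣ a1 + a4 := by
        refine (Nat.dvd_add_self_right).mp ?_
        rw [show a1 + a4 + N = a1 + a2 + a3 + a4 by omega]
        exact hsum
      have h14 : a1 + a4 = N := dvd_eq N _ (by omega) (by omega) hdvd
      have hg4N : g4 = N := by rw [hg4def]; exact pairN a1 a4 h14
      have hg4Z : ((g4 : ℤ)) ^ 2 = (N : ℤ) ^ 2 := by rw [hg4N]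
      linarith
    rcases h4 with ⟨hA4, hD4⟩ | h4
    · -- a2 + a4 = N, so a1 + a3 = N and g3 = N
      have hdvd : N ∣ a1 + a3 := by
        refine (Nat.dvd_add_self_right).mp ?_
        rw [show a1 + a3 + N = a1 + a2 + a3 + a4 by omega]
        exact hsum
      have h13 : a1 + a3 = N := dvd_eq N _ (by omega) (by omega) hdvd
      have hg3N : g3 = N := by rw [hg3def]; exact pairN a1 a3 h13
      have hg3Z : ((g3 : ℤ)) ^ 2 = (N : ℤ) ^ 2 := by rw [hg3N]
      linarith
    have h91 := nine d1 h1
    have h93 := nine d3 h3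
    have h94 := nine d4 h4
    linarith
  rcases h3 with ⟨hA3, hD3⟩ | h3
  · rcases h4 with ⟨hA4, hD4⟩ | h4
    · -- a3 + a4 = N, so a1 + a2 = N and g2 = N
      have hdvd : N ∣ a1 + a2 := by
        refine (Nat.dvd_add_self_right).mp ?_
        rw [show a1 + a2 + N = a1 + a2 + a3 + a4 by omega]
        exact hsum
      have h12 : a1 + a2 = N := dvd_eq N _ (by omega) (by omega) hdvd
      have hg2N : g2 = N := by rw [hg2def]; exact pairN a1 a2 h12
      have hg2Z : ((g2 : ℤ)) ^ 2 = (N : ℤ) ^ 2 := by rw [hg2N]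
      linarith
    have h91 := nine d1 h1
    have h92 := nine d2 h2
    have h94 := nine d4 h4
    linarith
  rcases h4 with ⟨hA4, hD4⟩ | h4
  · have h91 := nine d1 h1
    have h92 := nine d2 h2
    have h93 := nine d3 h3
    linarith
  · have h91 := nine d1 h1
    have h92 := nine d2 h2
    have h93 := nine d3 h3
    have h94 := nine d4 h4
    linarith
def Target (N a1 a2 a3 a4 : ℕ) : Prop :=
      ((N = 4 ∧ ({a1, a2, a3, a4} : Multiset ℕ) = {3, 2, 2, 1}) ∨
       (N = 5 ∧ ({a1, a2, a3, a4} : Multiset ℕ) = {2, 1, 1, 1}) ∨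
       (N = 5 ∧ ({a1, a2, a3, a4} : Multiset ℕ) = {4, 2, 2, 2}) ∨
       (N = 5 ∧ ({a1, a2, a3, a4} : Multiset ℕ) = {1, 3, 3, 3}) ∨
       (N = 5 ∧ ({a1, a2, a3, a4} : Multiset ℕ) = {3, 4, 4, 4}) ∨
       (N = 6 ∧ ({a1, a2, a3, a4} : Multiset ℕ) = {5, 3, 2, 2}) ∨
       (N = 6 ∧ ({a1, a2, a3, a4} : Multiset ℕ) = {1, 3, 4, 4}) ∨
       (N = 8 ∧ ({a1, a2, a3, a4} : Multiset ℕ) = {4, 2, 1, 1}) ∨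
       (N = 8 ∧ ({a1, a2, a3, a4} : Multiset ℕ) = {4, 6, 3, 3}) ∨
       (N = 8 ∧ ({a1, a2, a3, a4} : Multiset ℕ) = {4, 2, 5, 5}) ∨
       (N = 8 ∧ ({a1, a2, a3, a4} : Multiset ℕ) = {4, 6, 7, 7}) ∨
       (N = 8 ∧ ({a1, a2, a3, a4} : Multiset ℕ) = {7, 4, 3, 2}) ∨
       (N = 8 ∧ ({a1, a2, a3, a4} : Multiset ℕ) = {1, 4, 5, 6}))

instance (N a1 a2 a3 a4 : ℕ) : Decidable (Target N a1 a2 a3 a4) := by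
  unfold Target; infer_instance

def Cond (N a1 a2 a3 a4 : ℕ) : Prop :=
    ((a1 + a2 + a3 + a4) % N = 0 ∧ 0 < a1 ∧ 0 < a2 ∧ 0 < a3 ∧ 0 < a4 ∧
     (N % 2 = 1 ∨ a1 % 2 = 0 ∨ a2 % 2 = 0 ∨ a3 % 2 = 0 ∨ a4 % 2 = 0) ∧
     Nat.gcd (Nat.gcd (Nat.gcd (Nat.gcd N a1) a2) a3) a4 = 1) →
    (24 * (N : ℤ) ≤ SInt N a1 a2 a3 a4 ∧
      (SInt N a1 a2 a3 a4 = 24 * N ↔ Target N a1 a2 a3 a4))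

instance (N a1 a2 a3 a4 : ℕ) : Decidable (Cond N a1 a2 a3 a4) := by
  unfold Cond; infer_instance

set_option maxHeartbeats 4000000 in
lemma finiteCheck : ∀ N : ℕ, N < 14 → ∀ a1 : ℕ, a1 < N → ∀ a2 : ℕ, a2 < N →
    ∀ a3 : ℕ, a3 < N → ∀ a4 : ℕ, a4 < N → Cond N a1 a2 a3 a4 := by decide

/-- Arithmetic content of Theorem 3.8: for admissible parameters with `0 < aᵢ < N`
for all `i` such that either `N` is odd, or `N` is even and some `aᵢ` is even,
one has `Σ⁻ ≥ 1`, with equality exactly for the thirteen listed parameters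
(up to permutation of the `aᵢ`). -/
theorem stmt10 (N a1 a2 a3 a4 : ℕ) (hN : 1 < N)
    (ha1 : 0 < a1) (ha2 : 0 < a2) (ha3 : 0 < a3) (ha4 : 0 < a4)
    (hb1 : a1 < N) (hb2 : a2 < N) (hb3 : a3 < N) (hb4 : a4 < N)
    (hgcd : Nat.gcd (Nat.gcd (Nat.gcd (Nat.gcd N a1) a2) a3) a4 = 1)
    (hsum : N ∣ a1 + a2 + a3 + a4)
    (hcase : Odd N ∨ (Even N ∧ (Even a1 ∨ Even a2 ∨ Even a3 ∨ Even a4))) :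
    1 ≤ sigmaMinus N a1 a2 a3 a4 ∧
    (sigmaMinus N a1 a2 a3 a4 = 1 ↔
      ((N = 4 ∧ ({a1, a2, a3, a4} : Multiset ℕ) = {3, 2, 2, 1}) ∨
       (N = 5 ∧ ({a1, a2, a3, a4} : Multiset ℕ) = {2, 1, 1, 1}) ∨
       (N = 5 ∧ ({a1, a2, a3, a4} : Multiset ℕ) = {4, 2, 2, 2}) ∨
       (N = 5 ∧ ({a1, a2, a3, a4} : Multiset ℕ) = {1, 3, 3, 3}) ∨
       (N = 5 ∧ ({a1, a2, a3, a4} : Multiset ℕ) = {3, 4, 4, 4}) ∨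
       (N = 6 ∧ ({a1, a2, a3, a4} : Multiset ℕ) = {5, 3, 2, 2}) ∨
       (N = 6 ∧ ({a1, a2, a3, a4} : Multiset ℕ) = {1, 3, 4, 4}) ∨
       (N = 8 ∧ ({a1, a2, a3, a4} : Multiset ℕ) = {4, 2, 1, 1}) ∨
       (N = 8 ∧ ({a1, a2, a3, a4} : Multiset ℕ) = {4, 6, 3, 3}) ∨
       (N = 8 ∧ ({a1, a2, a3, a4} : Multiset ℕ) = {4, 2, 5, 5}) ∨
       (N = 8 ∧ ({a1, a2, a3, a4} : Multiset ℕ) = {4, 6, 7, 7}) ∨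
       (N = 8 ∧ ({a1, a2, a3, a4} : Multiset ℕ) = {7, 4, 3, 2}) ∨
       (N = 8 ∧ ({a1, a2, a3, a4} : Multiset ℕ) = {1, 4, 5, 6}))) := by
  have hN0 : 0 < N := by omega
  by_cases hbig : 14 ≤ N
  · have hlt := main_lt N a1 a2 a3 a4 hbig ha1 ha2 ha3 ha4 hb1 hb2 hb3 hb4 hsum
    constructor
    · exact (one_le_iff N a1 a2 a3 a4 hN0).mpr hlt.le
    · rw [eq_one_iff N a1 a2 a3 a4 hN0]
      constructor
      · intro h; omega
      · intro h; exfalso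
        rcases h with ⟨h, _⟩ | ⟨h, _⟩ | ⟨h, _⟩ | ⟨h, _⟩ | ⟨h, _⟩ | ⟨h, _⟩ | ⟨h, _⟩ |
          ⟨h, _⟩ | ⟨h, _⟩ | ⟨h, _⟩ | ⟨h, _⟩ | ⟨h, _⟩ | ⟨h, _⟩ <;> omega
  · have hc := finiteCheck N (by omega) a1 hb1 a2 hb2 a3 hb3 a4 hb4
    unfold Cond at hc
    have hmod : (a1 + a2 + a3 + a4) % N = 0 := Nat.mod_eq_zero_of_dvd hsum
    have hpar : N % 2 = 1 ∨ a1 % 2 = 0 ∨ a2 % 2 = 0 ∨ a3 % 2 = 0 ∨ a4 % 2 = 0 := by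
      rcases hcase with h | ⟨_, h⟩
      · exact Or.inl (Nat.odd_iff.mp h)
      · rcases h with h | h | h | h
        · exact Or.inr (Or.inl (Nat.even_iff.mp h))
        · exact Or.inr (Or.inr (Or.inl (Nat.even_iff.mp h)))
        · exact Or.inr (Or.inr (Or.inr (Or.inl (Nat.even_iff.mp h))))
        · exact Or.inr (Or.inr (Or.inr (Or.inr (Nat.even_iff.mp h))))
    obtain ⟨hle, hiff⟩ := hc ⟨hmod, ha1, ha2, ha3, ha4, hpar, hgcd⟩
    refine ⟨(one_le_iff N a1 a2 a3 a4 hN0).mpr hle, ?_⟩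
    rw [eq_one_iff N a1 a2 a3 a4 hN0]
    unfold Target at hiff
    exact hiff
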